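/- arXiv:1904.09426 — 3 statements merged into one kernel-verified Lean document; each statement's English description precedes it below -/
import Mathlib

section
/- Fix s ∈ C. Let H_s be the associative C-algebra generated by x, y, σ subject to the relations σ^2 = 1, σx = -xσ, σy = -yσ, and yx - xy = s·σ. Then H_s is a free C-module with basis {x^a y^b, x^a y^b σ : a, b ≥ 0}; in particular H_s ≅ C[x,y] ⊗ C[Z_2] as a C-vector space. -/
/-! The monomials `x^a y^b σ^ε` span `H_s` because the relations move `σ` to the right and `y`
past `x`, so their span is a left ideal containing `1`. They are independent because the same
rewriting rules define operators `X, Y, S` on the free module with basis `e (a, b, ε)` which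
satisfy the defining relations; the resulting action of `H_s` sends `x^a y^b σ^ε` applied to
`e (0, 0, false)` to `e (a, b, ε)`. The isomorphism with `ℂ[x,y] ⊗ ℂ[ℤ/2]` then just matches
two countably infinite bases. -/

open scoped TensorProduct

namespace Stmt13

/-- The defining relations of the rank-one symplectic reflection algebra `H_s`:
generators `x = ι 0`, `y = ι 1`, `σ = ι 2` with `σ² = 1`, `σx = -xσ`, `σy = -yσ`,
`yx - xy = s·σ`. -/
inductive Rel (s : ℂ) : FreeAlgebra ℂ (Fin 3) → FreeAlgebra ℂ (Fin 3) → Prop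
  | sigma_sq : Rel s (FreeAlgebra.ι ℂ 2 * FreeAlgebra.ι ℂ 2) 1
  | sigma_x : Rel s (FreeAlgebra.ι ℂ 2 * FreeAlgebra.ι ℂ 0)
      (-(FreeAlgebra.ι ℂ 0 * FreeAlgebra.ι ℂ 2))
  | sigma_y : Rel s (FreeAlgebra.ι ℂ 2 * FreeAlgebra.ι ℂ 1)
      (-(FreeAlgebra.ι ℂ 1 * FreeAlgebra.ι ℂ 2))
  | comm : Rel s (FreeAlgebra.ι ℂ 1 * FreeAlgebra.ι ℂ 0 - FreeAlgebra.ι ℂ 0 * FreeAlgebra.ι ℂ 1)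
      (algebraMap ℂ (FreeAlgebra ℂ (Fin 3)) s * FreeAlgebra.ι ℂ 2)

noncomputable section

section SpanGenerators

variable {R A : Type*} [CommSemiring R] [Semiring A] [Algebra R A]

theorem mul_mem_span_of_forall_mul_mem {S : Set A} {a m : A}
    (h : ∀ v ∈ S, a * v ∈ Submodule.span R S) (hm : m ∈ Submodule.span R S) :
    a * m ∈ Submodule.span R S :=
  (Submodule.span_le (p := (Submodule.span R S).comap (LinearMap.mulLeft R a))).2 h hm

theorem span_eq_top_of_mul_mem {G S : Set A} (hG : Algebra.adjoin R G = ⊤)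
    (h1 : 1 ∈ Submodule.span R S) (hmul : ∀ g ∈ G, ∀ v ∈ S, g * v ∈ Submodule.span R S) :
    Submodule.span R S = ⊤ := by
  refine Submodule.eq_top_iff'.2 fun a => ?_
  suffices ∀ m ∈ Submodule.span R S, a * m ∈ Submodule.span R S by simpa using this 1 h1
  induction (hG ▸ Algebra.mem_top : a ∈ Algebra.adjoin R G) using Algebra.adjoin_induction with
  | mem g hg => exact fun m => mul_mem_span_of_forall_mul_mem (hmul g hg)
  | algebraMap r => exact fun m hm => (Algebra.smul_def r m) ▸ Submodule.smul_mem _ r hm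
  | add x y _ _ hx hy =>
    exact fun m hm => (add_mul x y m).symm ▸ Submodule.add_mem _ (hx m hm) (hy m hm)
  | mul x y _ _ hx hy => exact fun m hm => (mul_assoc x y m).symm ▸ hx _ (hy m hm)

end SpanGenerators

lemma cast_succ_mod_two_sub {R : Type*} [Ring R] (a : ℕ) :
    (((a + 1) % 2 : ℕ) : R) - (a % 2 : ℕ) = (-1) ^ a := by
  rcases Nat.even_or_odd a with h | h
  · simp [Nat.succ_mod_two_eq_one_iff.2 (Nat.even_iff.1 h), Nat.even_iff.1 h, h.neg_one_pow]
  · simp [Nat.succ_mod_two_eq_zero_iff.2 (Nat.odd_iff.1 h), Nat.odd_iff.1 h, h.neg_one_pow]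

section Representation

variable {R : Type*} [CommRing R]

variable (R) in
abbrev PBWSpace := (ℕ × ℕ × Bool) →₀ R

variable (R) in
def opX : Module.End R (PBWSpace R) :=
  Finsupp.lmapDomain R R fun p => (p.1 + 1, p.2)

variable (R) in
def opS : Module.End R (PBWSpace R) :=
  Finsupp.lsum R fun p => (-1 : R) ^ (p.1 + p.2.1) • Finsupp.lsingle (p.1, p.2.1, !p.2.2)

/- In `H_s`, `y x^a = x^a y + s [a odd] x^(a-1) σ`; the truncated `a - 1` is harmless at `a = 0`,
where the coefficient `a % 2` vanishes. -/
def opY (s : R) : Module.End R (PBWSpace R) :=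
  Finsupp.lsum R fun p => Finsupp.lsingle (p.1, p.2.1 + 1, p.2.2) +
    (s * (-1) ^ p.2.1 * (p.1 % 2 : ℕ)) • Finsupp.lsingle (p.1 - 1, p.2.1, !p.2.2)

@[simp] lemma opX_single (a b : ℕ) (ε : Bool) (c : R) :
    opX R (Finsupp.single (a, b, ε) c) = Finsupp.single (a + 1, b, ε) c := by
  simp [opX]

@[simp] lemma opS_single (a b : ℕ) (ε : Bool) (c : R) :
    opS R (Finsupp.single (a, b, ε) c) = Finsupp.single (a, b, !ε) ((-1) ^ (a + b) * c) := by
  simp [opS]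

@[simp] lemma opY_single (s : R) (a b : ℕ) (ε : Bool) (c : R) :
    opY s (Finsupp.single (a, b, ε) c) = Finsupp.single (a, b + 1, ε) c +
      Finsupp.single (a - 1, b, !ε) (s * (-1) ^ b * (a % 2 : ℕ) * c) := by
  simp [opY]

lemma opS_mul_opS : opS R * opS R = 1 := by
  refine Finsupp.lhom_ext fun ⟨a, b, ε⟩ c => ?_
  simp only [Module.End.mul_apply, Module.End.one_apply, opS_single, Bool.not_not]
  congr 1
  rw [← mul_assoc, ← mul_pow]
  simp

lemma opS_mul_opX : opS R * opX R = -(opX R * opS R) := by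
  refine Finsupp.lhom_ext fun ⟨a, b, ε⟩ c => ?_
  simp only [Module.End.mul_apply, LinearMap.neg_apply, opS_single, opX_single,
    ← Finsupp.single_neg]
  congr 1
  ring

lemma opS_mul_opY (s : R) : opS R * opY s = -(opY s * opS R) := by
  refine Finsupp.lhom_ext fun ⟨a, b, ε⟩ c => ?_
  simp only [Module.End.mul_apply, LinearMap.neg_apply, map_add, opS_single, opY_single,
    Bool.not_not, neg_add, ← Finsupp.single_neg]
  congr 2
  · ring
  · rcases a with _ | a
    · simp
    · simp only [Nat.add_sub_cancel]
      ring

lemma opY_mul_opX_sub (s : R) : opY s * opX R - opX R * opY s = s • opS R := by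
  refine Finsupp.lhom_ext fun ⟨a, b, ε⟩ c => ?_
  simp only [LinearMap.sub_apply, Module.End.mul_apply, LinearMap.smul_apply, map_add, opS_single,
    opY_single, opX_single, Finsupp.smul_single, Nat.add_sub_cancel]
  rw [add_sub_add_left_eq_sub]
  rcases a with _ | a
  · simp only [Nat.zero_mod, Nat.cast_zero, mul_zero, zero_mul, Finsupp.single_zero, sub_zero]
    congr 1
    simp only [Nat.one_mod, Nat.cast_one, mul_one, zero_add, smul_eq_mul]
    ring
  · rw [Nat.add_sub_cancel, ← Finsupp.single_sub, smul_eq_mul]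
    congr 1
    linear_combination (s * (-1) ^ b * c) * cast_succ_mod_two_sub (R := R) (a + 1)

lemma opX_pow_single (n a b : ℕ) (ε : Bool) (c : R) :
    (opX R ^ n) (Finsupp.single (a, b, ε) c) = Finsupp.single (a + n, b, ε) c := by
  induction n with
  | zero => simp
  | succ n ih => rw [pow_succ', Module.End.mul_apply, ih, opX_single, add_assoc]

lemma opY_pow_single_zero (s : R) (n b : ℕ) (ε : Bool) (c : R) :
    (opY s ^ n) (Finsupp.single (0, b, ε) c) = Finsupp.single (0, b + n, ε) c := by
  induction n with
  | zero => simp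
  | succ n ih => simp [pow_succ', Module.End.mul_apply, ih, add_assoc]

end Representation

section Algebra

variable (s : ℂ)

def genX : RingQuot (Rel s) := RingQuot.mkAlgHom ℂ (Rel s) (FreeAlgebra.ι ℂ 0)
def genY : RingQuot (Rel s) := RingQuot.mkAlgHom ℂ (Rel s) (FreeAlgebra.ι ℂ 1)
def genS : RingQuot (Rel s) := RingQuot.mkAlgHom ℂ (Rel s) (FreeAlgebra.ι ℂ 2)

lemma adjoin_range_mkAlgHom_ι :
    Algebra.adjoin ℂ (Set.range fun i => RingQuot.mkAlgHom ℂ (Rel s) (FreeAlgebra.ι ℂ i)) = ⊤ := by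
  rw [← Function.comp_def, Set.range_comp, Algebra.adjoin_image, FreeAlgebra.adjoin_range_ι,
    Algebra.map_top, AlgHom.range_eq_top]
  exact RingQuot.mkAlgHom_surjective ℂ (Rel s)

lemma genS_mul_genS : genS s * genS s = 1 := by
  simpa [genS] using RingQuot.mkAlgHom_rel ℂ (Rel.sigma_sq (s := s))

lemma semiconjBy_genS_genX : SemiconjBy (genS s) (genX s) (-genX s) := by
  have h := RingQuot.mkAlgHom_rel ℂ (Rel.sigma_x (s := s))
  rw [map_mul, map_neg, map_mul] at h
  exact h.trans (neg_mul _ (genS s)).symm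

lemma semiconjBy_genS_genY : SemiconjBy (genS s) (genY s) (-genY s) := by
  have h := RingQuot.mkAlgHom_rel ℂ (Rel.sigma_y (s := s))
  rw [map_mul, map_neg, map_mul] at h
  exact h.trans (neg_mul _ (genS s)).symm

lemma genY_mul_genX : genY s * genX s = genX s * genY s + s • genS s := by
  have h := RingQuot.mkAlgHom_rel ℂ (Rel.comm (s := s))
  rwa [map_sub, map_mul, map_mul, map_mul, AlgHom.commutes, sub_eq_iff_eq_add',
    ← Algebra.smul_def] at h

def pbwMonomial (p : ℕ × ℕ × Bool) : RingQuot (Rel s) :=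
  genX s ^ p.1 * genY s ^ p.2.1 * bif p.2.2 then genS s else 1

lemma genX_mul_pbwMonomial (a b : ℕ) (ε : Bool) :
    genX s * pbwMonomial s (a, b, ε) = pbwMonomial s (a + 1, b, ε) := by
  simp only [pbwMonomial, pow_succ', mul_assoc]

lemma genS_mul_pbwMonomial (a b : ℕ) (ε : Bool) :
    genS s * pbwMonomial s (a, b, ε) = (-1 : ℂ) ^ (a + b) • pbwMonomial s (a, b, !ε) := by
  have hσ : genS s * (bif ε then genS s else 1) = bif !ε then genS s else 1 := by
    cases ε <;> simp [genS_mul_genS]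
  have h := ((semiconjBy_genS_genX s).pow_right a).mul_right
    ((semiconjBy_genS_genY s).pow_right b)
  rw [pbwMonomial, ← mul_assoc, h.eq, mul_assoc, hσ, ← neg_one_smul ℂ (genX s),
    ← neg_one_smul ℂ (genY s), smul_pow, smul_pow, smul_mul_smul_comm, smul_mul_assoc, pow_add]
  rfl

lemma genX_mul_mem_span (p : ℕ × ℕ × Bool) :
    genX s * pbwMonomial s p ∈ Submodule.span ℂ (Set.range (pbwMonomial s)) := by
  rw [genX_mul_pbwMonomial]
  exact Submodule.subset_span ⟨_, rfl⟩

lemma genS_mul_mem_span (p : ℕ × ℕ × Bool) :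
    genS s * pbwMonomial s p ∈ Submodule.span ℂ (Set.range (pbwMonomial s)) := by
  rw [genS_mul_pbwMonomial]
  exact Submodule.smul_mem _ _ (Submodule.subset_span ⟨_, rfl⟩)

lemma genY_mul_mem_span (a b : ℕ) (ε : Bool) :
    genY s * pbwMonomial s (a, b, ε) ∈ Submodule.span ℂ (Set.range (pbwMonomial s)) := by
  induction a with
  | zero =>
    have h : genY s * pbwMonomial s (0, b, ε) = pbwMonomial s (0, b + 1, ε) := by
      simp only [pbwMonomial, pow_zero, one_mul, pow_succ', mul_assoc]
    exact h ▸ Submodule.subset_span ⟨_, rfl⟩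
  | succ a ih =>
    rw [← genX_mul_pbwMonomial, ← mul_assoc, genY_mul_genX, add_mul, mul_assoc, smul_mul_assoc]
    exact Submodule.add_mem _
      (mul_mem_span_of_forall_mul_mem (Set.forall_mem_range.2 (genX_mul_mem_span s)) ih)
      (Submodule.smul_mem _ _ (genS_mul_mem_span s _))

lemma span_pbwMonomial_eq_top : Submodule.span ℂ (Set.range (pbwMonomial s)) = ⊤ := by
  refine span_eq_top_of_mul_mem (adjoin_range_mkAlgHom_ι s) ?_ ?_
  · have h : pbwMonomial s (0, 0, false) = 1 := by simp [pbwMonomial]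
    exact h ▸ Submodule.subset_span ⟨_, rfl⟩
  · rintro _ ⟨i, rfl⟩
    refine Set.forall_mem_range.2 fun ⟨a, b, ε⟩ => ?_
    fin_cases i
    · exact genX_mul_mem_span s _
    · exact genY_mul_mem_span s a b ε
    · exact genS_mul_mem_span s _

def pbwRep : RingQuot (Rel s) →ₐ[ℂ] Module.End ℂ (PBWSpace ℂ) :=
  RingQuot.liftAlgHom ℂ ⟨FreeAlgebra.lift ℂ ![opX ℂ, opY s, opS ℂ], fun _ _ h => by
    induction h with
    | sigma_sq => simpa using opS_mul_opS
    | sigma_x => simpa using opS_mul_opX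
    | sigma_y => simpa using opS_mul_opY s
    | comm => simpa [Algebra.smul_def] using opY_mul_opX_sub s⟩

lemma pbwRep_pbwMonomial_single (p : ℕ × ℕ × Bool) :
    pbwRep s (pbwMonomial s p) (Finsupp.single (0, 0, false) 1) = Finsupp.single p 1 := by
  obtain ⟨a, b, ε⟩ := p
  have hσ : pbwRep s (bif ε then genS s else 1) (Finsupp.single (0, 0, false) 1) =
      Finsupp.single (0, 0, ε) 1 := by
    cases ε <;> simp [pbwRep, genS]
  simp only [pbwMonomial, map_mul, map_pow, Module.End.mul_apply, hσ]
  simp [pbwRep, genX, genY, opY_pow_single_zero, opX_pow_single]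

lemma linearIndependent_pbwMonomial : LinearIndependent ℂ (pbwMonomial s) := by
  refine LinearIndependent.of_comp
    (LinearMap.applyₗ (Finsupp.single (0, 0, false) 1) ∘ₗ (pbwRep s).toLinearMap) ?_
  convert Finsupp.linearIndependent_single_one ℂ (ℕ × ℕ × Bool) with p
  exact pbwRep_pbwMonomial_single s p

def pbwBasis : Module.Basis (ℕ × ℕ × Bool) ℂ (RingQuot (Rel s)) :=
  Module.Basis.mk (linearIndependent_pbwMonomial s) (span_pbwMonomial_eq_top s).ge

end Algebra

end

/-- PBW property: `H_s` is free as a `ℂ`-module with basis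
`{x^a y^b, x^a y^b σ : a, b ≥ 0}`; in particular `H_s ≅ ℂ[x,y] ⊗ ℂ[ℤ/2]` as a
`ℂ`-vector space. -/
theorem stmt_13 (s : ℂ) :
    (∃ b : Module.Basis (ℕ × ℕ × Bool) ℂ (RingQuot (Rel s)),
      ∀ a c : ℕ,
        b (a, c, false) =
          RingQuot.mkAlgHom ℂ (Rel s) (FreeAlgebra.ι ℂ 0 ^ a * FreeAlgebra.ι ℂ 1 ^ c) ∧
        b (a, c, true) =
          RingQuot.mkAlgHom ℂ (Rel s)
            (FreeAlgebra.ι ℂ 0 ^ a * FreeAlgebra.ι ℂ 1 ^ c * FreeAlgebra.ι ℂ 2)) ∧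
    Nonempty (RingQuot (Rel s) ≃ₗ[ℂ]
      (MvPolynomial (Fin 2) ℂ ⊗[ℂ] MonoidAlgebra ℂ (Multiplicative (ZMod 2)))) := by
  refine ⟨⟨pbwBasis s, fun a c => ⟨?_, ?_⟩⟩, ?_⟩
  · simp [pbwBasis, pbwMonomial, genX, genY]
  · simp [pbwBasis, pbwMonomial, genX, genY, genS]
  · obtain ⟨e⟩ : Nonempty ((ℕ × ℕ × Bool) ≃ (Fin 2 →₀ ℕ) × Multiplicative (ZMod 2)) :=
      Cardinal.eq.1 (by simp only [Cardinal.mk_eq_aleph0])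
    exact ⟨(pbwBasis s).equiv ((MvPolynomial.basisMonomials (Fin 2) ℂ).tensorProduct
      (MonoidAlgebra.basis _ _)) e⟩

end Stmt13
end

section
/- Let n ≥ 2 and let s ∈ C with s ≠ 0. Then the quotient ring C[z,w]/(n z^{n-1} + w^2, 2zw - s) is a C-vector space of dimension n+1. -/
open MvPolynomial

/-!
Since `2zw - s` vanishes and `s` is a unit, `z` is invertible with `w = s / (2z)`. Eliminating `w`
turns the ideal `(N z^k + w², 2zw - s)` into `(z^(k+2) + c, w - d z^(k+1))` with
`c = (s/2)² / N` and `d = -2N / s`, so the quotient is `K[z] / (z^(k+2) + c)`, of dimension `k + 2`.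
-/

section

variable {R : Type*} [CommRing R] (f q : Polynomial R)

noncomputable def rootGraphIdeal : Ideal (MvPolynomial (Fin 2) R) :=
  Ideal.span {Polynomial.aeval (X 0) f, X 1 - Polynomial.aeval (X 0) q}

variable {f q}

theorem aeval_aeval_X {σ S : Type*} [CommRing S] [Algebra R S] (g : σ → S) (i : σ)
    (p : Polynomial R) :
    aeval g (Polynomial.aeval (X i : MvPolynomial σ R) p) = Polynomial.aeval (g i) p := by
  rw [← Polynomial.aeval_algHom_apply, aeval_X]

theorem aeval_eq_zero_of_mem_rootGraphIdeal {S : Type*} [CommRing S] [Algebra R S] {x : S}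
    (hx : Polynomial.aeval x f = 0) {p : MvPolynomial (Fin 2) R} (hp : p ∈ rootGraphIdeal f q) :
    aeval ![x, Polynomial.aeval x q] p = 0 := by
  obtain ⟨u, v, rfl⟩ := Ideal.mem_span_pair.mp hp
  simp [aeval_aeval_X, hx]

theorem aeval_mk_X_zero_rootGraphIdeal :
    Polynomial.aeval (Ideal.Quotient.mk (rootGraphIdeal f q) (X 0)) f = 0 := by
  rw [← Ideal.Quotient.mkₐ_eq_mk R, Polynomial.aeval_algHom_apply, Ideal.Quotient.mkₐ_eq_mk,
    Ideal.Quotient.eq_zero_iff_mem]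
  exact Ideal.subset_span (by simp)

theorem mk_X_one_rootGraphIdeal :
    Ideal.Quotient.mk (rootGraphIdeal f q) (X 1) =
      Polynomial.aeval (Ideal.Quotient.mk (rootGraphIdeal f q) (X 0)) q := by
  rw [← Ideal.Quotient.mkₐ_eq_mk R, Polynomial.aeval_algHom_apply, Ideal.Quotient.mkₐ_eq_mk,
    Ideal.Quotient.mk_eq_mk_iff_sub_mem]
  exact Ideal.subset_span (by simp)

variable (f q)

noncomputable def rootGraphQuotientToAdjoinRoot :
    (MvPolynomial (Fin 2) R ⧸ rootGraphIdeal f q) →ₐ[R] AdjoinRoot f :=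
  Ideal.Quotient.liftₐ _ _ fun _ ↦
    aeval_eq_zero_of_mem_rootGraphIdeal (AdjoinRoot.aeval_eq f ▸ AdjoinRoot.mk_self)

theorem rootGraphQuotientToAdjoinRoot_mk (p : MvPolynomial (Fin 2) R) :
    rootGraphQuotientToAdjoinRoot f q (Ideal.Quotient.mk _ p) =
      aeval ![AdjoinRoot.root f, Polynomial.aeval (AdjoinRoot.root f) q] p :=
  rfl

noncomputable def adjoinRootToRootGraphQuotient :
    AdjoinRoot f →ₐ[R] (MvPolynomial (Fin 2) R ⧸ rootGraphIdeal f q) :=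
  AdjoinRoot.liftAlgHom f (Algebra.ofId R _) _ (by
      rw [Algebra.toRingHom_ofId, ← Polynomial.aeval_def]
      exact aeval_mk_X_zero_rootGraphIdeal)

theorem adjoinRootToRootGraphQuotient_root :
    adjoinRootToRootGraphQuotient f q (AdjoinRoot.root f) = Ideal.Quotient.mk _ (X 0) :=
  AdjoinRoot.liftAlgHom_root ..

noncomputable def quotientRootGraphIdealEquivAdjoinRoot :
    (MvPolynomial (Fin 2) R ⧸ rootGraphIdeal f q) ≃ₐ[R] AdjoinRoot f :=
  AlgEquiv.ofAlgHom (rootGraphQuotientToAdjoinRoot f q) (adjoinRootToRootGraphQuotient f q)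
    (AdjoinRoot.algHom_ext (by
      simp [adjoinRootToRootGraphQuotient_root, rootGraphQuotientToAdjoinRoot_mk]))
    (Ideal.Quotient.algHom_ext _ (MvPolynomial.algHom_ext fun i => by
      simp only [AlgHom.comp_apply, Ideal.Quotient.mkₐ_eq_mk, AlgHom.id_apply,
        rootGraphQuotientToAdjoinRoot_mk, aeval_X]
      fin_cases i
      · exact adjoinRootToRootGraphQuotient_root f q
      · simp only [Fin.mk_one, Matrix.cons_val_one, Matrix.cons_val_fin_one]
        rw [← Polynomial.aeval_algHom_apply, adjoinRootToRootGraphQuotient_root,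
          mk_X_one_rootGraphIdeal]))

end

theorem span_deformedD_eq_span_graph {A : Type*} [CommRing A] (k : ℕ) {N s c d z w : A}
    (hs : IsUnit s) (hdc : d ^ 2 * c = N) (hcd : 2 * d * c = -s) :
    Ideal.span {N * z ^ k + w ^ 2, 2 * z * w - s} =
      Ideal.span {z ^ (k + 2) + c, w - d * z ^ (k + 1)} := by
  apply le_antisymm <;> rw [Ideal.span_le, Set.pair_subset_iff]
  · exact ⟨Ideal.mem_span_pair.2 ⟨d ^ 2 * z ^ k, w + d * z ^ (k + 1), by
        linear_combination z ^ k * hdc⟩,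
      Ideal.mem_span_pair.2 ⟨2 * d, 2 * z, by linear_combination hcd⟩⟩
  · refine ⟨(Ideal.unit_mul_mem_iff_mem _ (hs.pow 2)).1 (Ideal.mem_span_pair.2
        ⟨4 * c * z ^ 2, -c * (2 * z * w + s), ?_⟩),
      (Ideal.unit_mul_mem_iff_mem _ hs).1 (Ideal.mem_span_pair.2 ⟨2 * z, -w, ?_⟩)⟩
    · linear_combination (-4 * c * z ^ (k + 2)) * hdc + (2 * d * c - s) * z ^ (k + 2) * hcd
    · linear_combination (-2 * z ^ (k + 1)) * hdc + d * z ^ (k + 1) * hcd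

section Field

variable {K : Type*} [Field K]

theorem span_deformedD_eq_rootGraphIdeal (k : ℕ) {N s : K} (h2 : (2 : K) ≠ 0) (hN : N ≠ 0)
    (hs : s ≠ 0) :
    Ideal.span {C N * X 0 ^ k + X 1 ^ 2, C 2 * X 0 * X 1 - C s} =
      rootGraphIdeal (Polynomial.X ^ (k + 2) + Polynomial.C ((s / 2) ^ 2 / N))
        (Polynomial.C (-2 * N / s) * Polynomial.X ^ (k + 1)) := by
  simp only [rootGraphIdeal, map_add, map_mul, map_pow, Polynomial.aeval_X, Polynomial.aeval_C,
    MvPolynomial.algebraMap_eq, map_ofNat]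
  refine span_deformedD_eq_span_graph k (hs.isUnit.map C) ?_ ?_
  · rw [← map_pow, ← map_mul]
    congr 1
    field_simp
  · rw [← map_ofNat C 2, ← map_mul, ← map_mul, ← map_neg]
    congr 1
    field_simp

theorem finrank_quotient_span_deformedD (k : ℕ) {N s : K} (h2 : (2 : K) ≠ 0) (hN : N ≠ 0)
    (hs : s ≠ 0) :
    Module.finrank K (MvPolynomial (Fin 2) K ⧸
      Ideal.span {C N * X 0 ^ k + X 1 ^ 2, C 2 * X 0 * X 1 - C s}) = k + 2 := by
  rw [span_deformedD_eq_rootGraphIdeal k h2 hN hs,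
    (quotientRootGraphIdealEquivAdjoinRoot _ _).toLinearEquiv.finrank_eq]
  exact finrank_quotient_span_eq_natDegree.trans Polynomial.natDegree_X_pow_add_C

end Field

/-- Let `n ≥ 2` and `s ∈ ℂ` with `s ≠ 0`.  Then the quotient ring
`ℂ[z,w]/(n z^{n-1} + w², 2zw - s)` is a `ℂ`-vector space of dimension `n+1`. -/
theorem stmt_14 (n : ℕ) (hn : 2 ≤ n) (s : ℂ) (hs : s ≠ 0) :
    letI I : Ideal (MvPolynomial (Fin 2) ℂ) :=
      Ideal.span {C ((n : ℕ) : ℂ) * X 0 ^ (n - 1) + X 1 ^ 2, C 2 * X 0 * X 1 - C s}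
    Module.finrank ℂ (MvPolynomial (Fin 2) ℂ ⧸ I) = n + 1 := by
  have hN : ((n : ℕ) : ℂ) ≠ 0 := Nat.cast_ne_zero.2 (by omega)
  rw [show n + 1 = n - 1 + 2 by omega]
  exact finrank_quotient_span_deformedD (n - 1) two_ne_zero hN hs
end

section
/- Let G be a finite group acting on a commutative C-algebra A by algebra automorphisms, and let A[G] = A ⋊ C[G] with G acting on A[G] ⊗ A diagonally by g·(a_0 h ⊗ a_1) = ({}^g a_0)(ghg^{-1}) ⊗ {}^g a_1. Let π: A[G] ⊗ A → (A[G] ⊗ A)_G be the projection onto coinvariants. Define Γ(π(a_0 g_0 ⊗ a_1)) = (1/|G|) ∑_{g∈G} ({}^g a_0)(g g_0 g^{-1}) ⊗ ({}^g a_1) ∈ A[G] ⊗ A, and define Ψ: A[G] ⊗ A[G] → (A[G] ⊗ A)_G by Ψ(a_0 g_0 ⊗ a_1 g_1) = π(({}^{g_1} a_0)(g_1 g_0) ⊗ a_1). Then Γ is well defined on coinvariants and Ψ(Γ(ξ)) = ξ for every ξ ∈ (A[G] ⊗ A)_G (viewing Γ(ξ) as an element of A[G] ⊗ A[G] via A ⊂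 A[G], a ↦ a·e). -/
open scoped TensorProduct

private lemma vext' {G : Type*} {A : Type*} [CommRing A] [Algebra ℂ A]
    {M : Type*} [AddCommGroup M] [Module ℂ M]
    (f g : (G →₀ (A ⊗[ℂ] A)) →ₗ[ℂ] M)
    (h : ∀ (x : G) (a b : A), f (Finsupp.single x (a ⊗ₜ[ℂ] b)) =
        g (Finsupp.single x (a ⊗ₜ[ℂ] b))) : f = g := by
  apply Finsupp.lhom_ext'
  intro x
  apply TensorProduct.ext'
  intro a b
  simpa using h x a b

/-- Let `G` be a finite group acting on a commutative `ℂ`-algebra `A` by algebra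
automorphisms.  Model `A[G] ⊗ A` as `V = G →₀ (A ⊗[ℂ] A)` (the element `a₀h ⊗ a₁`
being `single h (a₀ ⊗ a₁)`), with the diagonal `G`-action
`g·(a₀h ⊗ a₁) = (ᵍa₀)(ghg⁻¹) ⊗ ᵍa₁`, and model `A[G] ⊗ A[G]` as
`W = (G × G) →₀ (A ⊗[ℂ] A)` (the element `a₀g₀ ⊗ a₁g₁` being
`single (g₀,g₁) (a₀ ⊗ a₁)`).  Let `N ⊆ V` be the span of `{g·v - v}` and
`π = mkQ : V → V/N` the projection onto coinvariants.  Then the formula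
`Γ(π(a₀g₀ ⊗ a₁)) = (1/|G|) ∑_g (ᵍa₀)(gg₀g⁻¹)·e ⊗ ᵍa₁` gives a well-defined linear map
on coinvariants (valued in `A[G] ⊗ A[G]` via `a ↦ a·e`), and with
`Ψ(a₀g₀ ⊗ a₁g₁) = π((ᵍ¹a₀)(g₁g₀) ⊗ a₁)` one has `Ψ(Γ(ξ)) = ξ` for every
coinvariant `ξ`. -/
theorem stmt_15 {G : Type*} [Group G] [Fintype G]
    {A : Type*} [CommRing A] [Algebra ℂ A] [MulSemiringAction G A]
    (ρ : G → ((G →₀ (A ⊗[ℂ] A)) →ₗ[ℂ] (G →₀ (A ⊗[ℂ] A))))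
    (hρ : ∀ (g h : G) (a₀ a₁ : A),
      ρ g (Finsupp.single h (a₀ ⊗ₜ[ℂ] a₁)) =
        Finsupp.single (g * h * g⁻¹) ((g • a₀) ⊗ₜ[ℂ] (g • a₁)))
    (N : Submodule ℂ (G →₀ (A ⊗[ℂ] A)))
    (hN : N = Submodule.span ℂ {v | ∃ (g : G) (w : G →₀ (A ⊗[ℂ] A)), v = ρ g w - w}) :
    ∃ (Γ : ((G →₀ (A ⊗[ℂ] A)) ⧸ N) →ₗ[ℂ] ((G × G) →₀ (A ⊗[ℂ] A)))
      (Ψ : ((G × G) →₀ (A ⊗[ℂ] A)) →ₗ[ℂ] ((G →₀ (A ⊗[ℂ] A)) ⧸ N)),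
      (∀ (g₀ : G) (a₀ a₁ : A),
        Γ (N.mkQ (Finsupp.single g₀ (a₀ ⊗ₜ[ℂ] a₁))) =
          ((Fintype.card G : ℂ))⁻¹ •
            ∑ g : G, Finsupp.single (g * g₀ * g⁻¹, (1 : G))
              ((g • a₀) ⊗ₜ[ℂ] (g • a₁))) ∧
      (∀ (g₀ g₁ : G) (a₀ a₁ : A),
        Ψ (Finsupp.single (g₀, g₁) (a₀ ⊗ₜ[ℂ] a₁)) =
          N.mkQ (Finsupp.single (g₁ * g₀) ((g₁ • a₀) ⊗ₜ[ℂ] a₁))) ∧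
      ∀ ξ, Ψ (Γ ξ) = ξ := by
  classical
  -- the G-action on A commutes with ℂ-scalars (derived from ℂ-linearity of ρ)
  have hsmul : ∀ (g : G) (c : ℂ) (a : A), g • (c • a) = c • (g • a) := by
    intro g c a
    have h1 : ρ g (Finsupp.single (1 : G) ((c • a) ⊗ₜ[ℂ] (1 : A))) =
        c • ρ g (Finsupp.single (1 : G) (a ⊗ₜ[ℂ] (1 : A))) := by
      rw [← map_smul, Finsupp.smul_single, TensorProduct.smul_tmul']
    rw [hρ, hρ, Finsupp.smul_single, TensorProduct.smul_tmul'] at h1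
    have h2 : (g • (c • a)) ⊗ₜ[ℂ] (g • (1 : A)) = (c • (g • a)) ⊗ₜ[ℂ] (g • (1 : A)) :=
      Finsupp.single_injective _ h1
    have h3 := congrArg (LinearMap.mul' ℂ A) h2
    simpa [smul_one] using h3
  set s : G → A →ₗ[ℂ] A := fun g =>
    { toFun := fun a => g • a
      map_add' := fun a b => smul_add g a b
      map_smul' := fun c a => hsmul g c a } with hs
  set c : ℂ := ((Fintype.card G : ℂ))⁻¹ with hc
  set L : (G →₀ (A ⊗[ℂ] A)) →ₗ[ℂ] ((G × G) →₀ (A ⊗[ℂ] A)) :=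
    Finsupp.lmapDomain (A ⊗[ℂ] A) ℂ (fun h => (h, (1 : G))) with hL
  set Γ₀ : (G →₀ (A ⊗[ℂ] A)) →ₗ[ℂ] ((G × G) →₀ (A ⊗[ℂ] A)) :=
    c • ∑ g : G, L ∘ₗ ρ g with hΓ₀
  have Γ₀single : ∀ (g₀ : G) (a b : A),
      Γ₀ (Finsupp.single g₀ (a ⊗ₜ[ℂ] b)) =
        c • ∑ g : G, Finsupp.single (g * g₀ * g⁻¹, (1 : G)) ((g • a) ⊗ₜ[ℂ] (g • b)) := by
    intro g₀ a b
    simp only [hΓ₀, LinearMap.smul_apply, LinearMap.sum_apply, LinearMap.comp_apply, hρ, hL,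
      Finsupp.lmapDomain_apply, Finsupp.mapDomain_single]
  have Γ₀inv : ∀ g : G, Γ₀ ∘ₗ ρ g = Γ₀ := by
    intro g
    apply vext'
    intro h a b
    rw [LinearMap.comp_apply, hρ, Γ₀single, Γ₀single]
    congr 1
    apply Fintype.sum_equiv (Equiv.mulRight g)
    intro k
    simp only [Equiv.coe_mulRight]
    rw [mul_smul, mul_smul]
    congr 2
    group
  have hker : N ≤ LinearMap.ker Γ₀ := by
    rw [hN, Submodule.span_le]
    rintro v ⟨g, w, rfl⟩
    simp only [SetLike.mem_coe, LinearMap.mem_ker, map_sub]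
    have := LinearMap.congr_fun (Γ₀inv g) w
    rw [LinearMap.comp_apply] at this
    rw [this, sub_self]
  set Γ : ((G →₀ (A ⊗[ℂ] A)) ⧸ N) →ₗ[ℂ] ((G × G) →₀ (A ⊗[ℂ] A)) :=
    N.liftQ Γ₀ hker with hΓ
  set Ψ : ((G × G) →₀ (A ⊗[ℂ] A)) →ₗ[ℂ] ((G →₀ (A ⊗[ℂ] A)) ⧸ N) :=
    Finsupp.lsum ℂ (fun p : G × G =>
      N.mkQ ∘ₗ (Finsupp.lsingle (p.2 * p.1)) ∘ₗ TensorProduct.map (s p.2) LinearMap.id) with hΨ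
  have Γform : ∀ (g₀ : G) (a₀ a₁ : A),
      Γ (N.mkQ (Finsupp.single g₀ (a₀ ⊗ₜ[ℂ] a₁))) =
        c • ∑ g : G, Finsupp.single (g * g₀ * g⁻¹, (1 : G)) ((g • a₀) ⊗ₜ[ℂ] (g • a₁)) := by
    intro g₀ a₀ a₁
    rw [hΓ, Submodule.mkQ_apply, Submodule.liftQ_apply]
    exact Γ₀single g₀ a₀ a₁
  have Ψform : ∀ (g₀ g₁ : G) (a₀ a₁ : A),
      Ψ (Finsupp.single (g₀, g₁) (a₀ ⊗ₜ[ℂ] a₁)) =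
        N.mkQ (Finsupp.single (g₁ * g₀) ((g₁ • a₀) ⊗ₜ[ℂ] a₁)) := by
    intro g₀ g₁ a₀ a₁
    rw [hΨ, Finsupp.lsum_single]
    simp [hs, TensorProduct.map_tmul]
  refine ⟨Γ, Ψ, Γform, Ψform, ?_⟩
  have cardne : (Fintype.card G : ℂ) ≠ 0 := by
    exact_mod_cast Nat.cast_ne_zero.mpr Fintype.card_ne_zero
  have key : Ψ ∘ₗ Γ = LinearMap.id := by
    apply Submodule.linearMap_qext
    apply vext'
    intro g₀ a b
    simp only [LinearMap.comp_apply, LinearMap.id_apply, Submodule.mkQ_apply]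
    rw [← Submodule.mkQ_apply, Γform, map_smul, map_sum]
    have step : ∀ g : G,
        Ψ (Finsupp.single (g * g₀ * g⁻¹, (1 : G)) ((g • a) ⊗ₜ[ℂ] (g • b))) =
          N.mkQ (Finsupp.single g₀ (a ⊗ₜ[ℂ] b)) := by
      intro g
      rw [Ψform, one_mul, one_smul, ← hρ]
      rw [← sub_eq_zero, ← map_sub]
      rw [Submodule.mkQ_apply, Submodule.Quotient.mk_eq_zero]
      rw [hN]
      exact Submodule.subset_span ⟨g, _, rfl⟩
    rw [Finset.sum_congr rfl (fun g _ => step g)]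
    rw [Finset.sum_const, Finset.card_univ, ← Nat.cast_smul_eq_nsmul ℂ, smul_smul, hc,
      inv_mul_cancel₀ cardne, one_smul]
  intro ξ
  have := LinearMap.congr_fun key ξ
  simpa using this
end
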